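/- Let $p \in (1,\infty)$ and let $f, g : \mathbb{R}^n \to \mathbb{R}$ be measurable with $f \ge 0$ and $g > 0$. Then for all $x, y \in \mathbb{R}^n$, $|f(x)-f(y)|^p \ge |g(x)-g(y)|^{p-2}(g(x)-g(y))\left(\frac{f(x)^p}{g(x)^{p-1}} - \frac{f(y)^p}{g(y)^{p-1}}\right)$. -/
import Mathlib

open MeasureTheory Metric Set

lemma picone_persp (p : ℝ) {a c : ℝ} (ha : 0 ≤ a) (hc : 0 < c) :
    c * (a / c) ^ p = a ^ p / c ^ (p - 1) := by
  have h1 : (0:ℝ) < c ^ p := Real.rpow_pos_of_pos hc p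
  rw [Real.div_rpow ha hc.le, Real.rpow_sub hc, Real.rpow_one]
  field_simp

lemma picone_subadd (p : ℝ) (hp : 1 ≤ p) {a1 a2 c1 c2 : ℝ}
    (ha1 : 0 ≤ a1) (ha2 : 0 ≤ a2) (hc1 : 0 < c1) (hc2 : 0 < c2) :
    (a1 + a2) ^ p / (c1 + c2) ^ (p - 1) ≤ a1 ^ p / c1 ^ (p - 1) + a2 ^ p / c2 ^ (p - 1) := by
  have hc : 0 < c1 + c2 := by linarith
  have hconv := (convexOn_rpow hp).2 (Set.mem_Ici.2 (div_nonneg ha1 hc1.le))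
    (Set.mem_Ici.2 (div_nonneg ha2 hc2.le))
    (div_nonneg hc1.le hc.le) (div_nonneg hc2.le hc.le)
    (by field_simp)
  simp only [smul_eq_mul] at hconv
  have e1 : c1 / (c1 + c2) * (a1 / c1) + c2 / (c1 + c2) * (a2 / c2) = (a1 + a2) / (c1 + c2) := by
    field_simp
  rw [e1] at hconv
  calc (a1 + a2) ^ p / (c1 + c2) ^ (p - 1)
      = (c1 + c2) * ((a1 + a2) / (c1 + c2)) ^ p :=
        (picone_persp p (by linarith) hc).symm
    _ ≤ (c1 + c2) * (c1 / (c1 + c2) * (a1 / c1) ^ p + c2 / (c1 + c2) * (a2 / c2) ^ p) :=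
        mul_le_mul_of_nonneg_left hconv hc.le
    _ = c1 * (a1 / c1) ^ p + c2 * (a2 / c2) ^ p := by field_simp
    _ = a1 ^ p / c1 ^ (p - 1) + a2 ^ p / c2 ^ (p - 1) := by
        rw [picone_persp p ha1 hc1, picone_persp p ha2 hc2]

lemma picone_key (p : ℝ) (hp : 1 < p) {A B C D : ℝ}
    (hA : 0 ≤ A) (hB : 0 ≤ B) (hC : 0 < C) (hD : 0 < D) (hDC : D ≤ C) :
    |C - D| ^ (p - 2) * (C - D) * (A ^ p / C ^ (p - 1) - B ^ p / D ^ (p - 1))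
      ≤ |A - B| ^ p := by
  have hRHS : (0:ℝ) ≤ |A - B| ^ p := Real.rpow_nonneg (abs_nonneg _) p
  rcases eq_or_lt_of_le hDC with h | h
  · rw [← h]
    simp [hRHS]
  · have hCD : 0 < C - D := by linarith
    rw [abs_of_pos hCD]
    have h1 : (C - D) ^ (p - 2) * (C - D) = (C - D) ^ (p - 1) := by
      have e : p - 1 = (p - 2) + 1 := by ring
      rw [e, Real.rpow_add_one hCD.ne']
    rw [h1]
    have hCD1 : (0:ℝ) < (C - D) ^ (p - 1) := Real.rpow_pos_of_pos hCD _
    by_cases hd : A ^ p / C ^ (p - 1) - B ^ p / D ^ (p - 1) ≤ 0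
    · exact le_trans (mul_nonpos_of_nonneg_of_nonpos hCD1.le hd) hRHS
    · push_neg at hd
      have hd' : B ^ p / D ^ (p - 1) < A ^ p / C ^ (p - 1) := by linarith
      -- show B < A
      have hDp : (0:ℝ) < D ^ (p - 1) := Real.rpow_pos_of_pos hD _
      have hCp : (0:ℝ) < C ^ (p - 1) := Real.rpow_pos_of_pos hC _
      have hDCp : D ^ (p - 1) ≤ C ^ (p - 1) :=
        Real.rpow_le_rpow hD.le hDC (by linarith)
      have h2 : B ^ p / C ^ (p - 1) ≤ B ^ p / D ^ (p - 1) :=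
        div_le_div_of_nonneg_left (Real.rpow_nonneg hB p) hDp hDCp
      have h3 : B ^ p < A ^ p := by
        have := lt_of_le_of_lt h2 hd'
        exact (div_lt_div_iff_of_pos_right hCp).mp this
      have hBA : B < A := by
        by_contra hba
        push_neg at hba
        exact absurd (Real.rpow_le_rpow hA hba (by linarith)) (not_le.mpr h3)
      have hsub := picone_subadd p hp.le (by linarith : (0:ℝ) ≤ A - B) hB hCD hD
      rw [show A - B + B = A by ring, show C - D + D = C by ring] at hsub
      have h4 : A ^ p / C ^ (p - 1) - B ^ p / D ^ (p - 1) ≤ (A - B) ^ p / (C - D) ^ (p - 1) := by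
        linarith
      calc (C - D) ^ (p - 1) * (A ^ p / C ^ (p - 1) - B ^ p / D ^ (p - 1))
          ≤ (C - D) ^ (p - 1) * ((A - B) ^ p / (C - D) ^ (p - 1)) :=
            mul_le_mul_of_nonneg_left h4 hCD1.le
        _ = (A - B) ^ p := by field_simp
        _ = |A - B| ^ p := by rw [abs_of_pos (by linarith : 0 < A - B)]

/-- Discrete Picone inequality. -/
theorem discrete_picone (n : ℕ) (p : ℝ) (hp : 1 < p)
    (f g : EuclideanSpace ℝ (Fin n) → ℝ)
    (hf : Measurable f) (hg : Measurable g)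
    (hf0 : ∀ x, 0 ≤ f x) (hg0 : ∀ x, 0 < g x) :
    ∀ x y : EuclideanSpace ℝ (Fin n),
      |g x - g y| ^ (p - 2) * (g x - g y) *
        (f x ^ p / g x ^ (p - 1) - f y ^ p / g y ^ (p - 1))
      ≤ |f x - f y| ^ p := by
  intro x y
  rcases le_total (g y) (g x) with h | h
  · exact picone_key p hp (hf0 x) (hf0 y) (hg0 x) (hg0 y) h
  · have hk := picone_key p hp (hf0 y) (hf0 x) (hg0 y) (hg0 x) h
    calc |g x - g y| ^ (p - 2) * (g x - g y) *
          (f x ^ p / g x ^ (p - 1) - f y ^ p / g y ^ (p - 1))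
        = |g y - g x| ^ (p - 2) * (g y - g x) *
          (f y ^ p / g y ^ (p - 1) - f x ^ p / g x ^ (p - 1)) := by
          rw [abs_sub_comm]; ring
      _ ≤ |f y - f x| ^ p := hk
      _ = |f x - f y| ^ p := by rw [abs_sub_comm]
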